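/- Fix natural numbers m ≥ 2 and k ≥ 1 and a real λ with 0 ≤ λ < 1. Let Π be a profile of k ballots over m candidates, let p be a candidate, and let Π' be a p-raise of Π. Then for every candidate q ≠ p with H(p,Π) ≥ H(q,Π), it holds that H(p,Π') > H(q,Π'). (Hybrid-score winner preservation step in Case 3 of the monotonicity of CHB.) -/
import Mathlib


open Finset

/-- A ballot over `m` candidates: a bijection assigning to each candidate its rank,
with rank `0` the most preferred. -/
abbrev Ballot (m : ℕ) := Fin m ≃ Fin m

/-- A profile of `k` ballots over `m` candidates. -/
abbrev Profile (m k : ℕ) := Fin k → Ballot m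

/-- The Borda score of candidate `p` in profile `A`: `∑ i, (m - 1 - rank_i(p))`. -/
def borda {m k : ℕ} (A : Profile m k) (p : Fin m) : ℕ :=
  ∑ i, (m - 1 - ((A i) p : ℕ))

/-- The first-place count of candidate `p` in profile `A`. -/
def firstCount {m k : ℕ} (A : Profile m k) (p : Fin m) : ℕ :=
  (Finset.univ.filter (fun i => ((A i) p : ℕ) = 0)).card

/-- `A'` is a `p`-raise of `A`: a single voter `i₀` strictly improves the rank of `p`
while preserving the relative order of all other candidates. -/
def IsPRaise {m k : ℕ} (p : Fin m) (A A' : Profile m k) : Prop :=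
  ∃ i₀ : Fin k,
    (∀ i, i ≠ i₀ → A' i = A i) ∧
    ((A' i₀) p : ℕ) < ((A i₀) p : ℕ) ∧
    ∀ q q' : Fin m, q ≠ p → q' ≠ p →
      (((A' i₀) q : ℕ) < ((A' i₀) q' : ℕ) ↔ ((A i₀) q : ℕ) < ((A i₀) q' : ℕ))

/-- The hybrid score of candidate `p`:
`H(p,A) = (1 - λ) * B(p,A) / (k * (m - 1)) + λ * t(p,A) / k`. -/
noncomputable def hybrid {m k : ℕ} (lam : ℝ) (A : Profile m k) (p : Fin m) : ℝ :=
  (1 - lam) * (borda A p : ℝ) / ((k : ℝ) * ((m : ℝ) - 1)) +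
    lam * (firstCount A p : ℝ) / (k : ℝ)

lemma card_lt_rank {m : ℕ} (e : Fin m ≃ Fin m) (j : Fin m) :
    (univ.filter fun x => ((e x):ℕ) < ((e j):ℕ)).card = (e j : ℕ) := by
  have h1 : (univ.filter fun x => ((e x):ℕ) < ((e j):ℕ))
      = (univ.filter fun y : Fin m => (y:ℕ) < ((e j):ℕ)).map e.symm.toEmbedding := by
    ext x
    simp only [mem_filter, mem_univ, true_and, Finset.mem_map, Equiv.coe_toEmbedding]
    constructor
    · intro h; exact ⟨e x, h, e.symm_apply_apply x⟩
    · rintro ⟨y, hy, rfl⟩; simpa using hy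
  rw [h1, Finset.card_map]
  have h2 : (univ.filter fun y : Fin m => (y:ℕ) < ((e j):ℕ)) = Finset.Iio (e j) := by
    ext y
    simp only [mem_filter, mem_univ, true_and, Finset.mem_Iio, Fin.lt_iff_val_lt_val]
  rw [h2, Fin.card_Iio]

lemma rank_mono {m : ℕ} (e e' : Fin m ≃ Fin m) (p : Fin m)
    (hp : ((e' p):ℕ) < ((e p):ℕ))
    (hpres : ∀ q q' : Fin m, q ≠ p → q' ≠ p →
      (((e' q):ℕ) < ((e' q'):ℕ) ↔ ((e q):ℕ) < ((e q'):ℕ)))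
    (q : Fin m) (hq : q ≠ p) : ((e q):ℕ) ≤ ((e' q):ℕ) := by
  have hpq : ((e p):ℕ) < ((e q):ℕ) → ((e' p):ℕ) < ((e' q):ℕ) := by
    intro h
    by_contra hle
    push_neg at hle
    have hsub : (univ.filter fun x => ((e x):ℕ) < ((e p):ℕ)) ⊆
        (univ.filter fun x => ((e' x):ℕ) < ((e' q):ℕ)) := by
      intro x hx
      simp only [mem_filter, mem_univ, true_and] at hx ⊢
      have hxp : x ≠ p := fun h' => by simp [h'] at hx
      exact (hpres x q hxp hq).mpr (hx.trans h)
    have := Finset.card_le_card hsub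
    rw [card_lt_rank, card_lt_rank] at this
    omega
  have hsub : (univ.filter fun x => ((e x):ℕ) < ((e q):ℕ)) ⊆
      (univ.filter fun x => ((e' x):ℕ) < ((e' q):ℕ)) := by
    intro x hx
    simp only [mem_filter, mem_univ, true_and] at hx ⊢
    by_cases hxp : x = p
    · subst hxp; exact hpq hx
    · exact (hpres x q hxp hq).mpr hx
  have := Finset.card_le_card hsub
  rwa [card_lt_rank, card_lt_rank] at this

/-- **Hybrid-score winner preservation step in Case 3 of the monotonicity of CHB.**
For `0 ≤ λ < 1` and any `p`-raise `A'` of `A`, every candidate `q ≠ p` whose hybrid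
score was at most that of `p` in `A` has strictly smaller hybrid score than `p`
in `A'`. -/
theorem hybrid_winner_preserved_of_pRaise {m k : ℕ} (hm : 2 ≤ m) (hk : 1 ≤ k)
    (lam : ℝ) (hlam0 : 0 ≤ lam) (hlam1 : lam < 1)
    (A A' : Profile m k) (p : Fin m) (hraise : IsPRaise p A A') :
    ∀ q : Fin m, q ≠ p → hybrid lam A q ≤ hybrid lam A p →
      hybrid lam A' q < hybrid lam A' p := by
  obtain ⟨i₀, heq, hlt, hpres⟩ := hraise
  intro q hq hH
  have hBp : borda A p < borda A' p := by
    apply Finset.sum_lt_sum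
    · intro i _
      by_cases hi : i = i₀
      · subst hi; omega
      · rw [heq i hi]
    · refine ⟨i₀, mem_univ _, ?_⟩
      have := (A i₀ p).isLt
      omega
  have hBq : borda A' q ≤ borda A q := by
    apply Finset.sum_le_sum
    intro i _
    by_cases hi : i = i₀
    · subst hi
      have := rank_mono (A i) (A' i) p hlt hpres q hq
      omega
    · rw [heq i hi]
  have htp : firstCount A p ≤ firstCount A' p := by
    apply Finset.card_le_card
    intro i hi
    simp only [mem_filter, mem_univ, true_and] at hi ⊢
    by_cases h : i = i₀
    · subst h; omega
    · rw [heq i h]; exact hi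
  have htq : firstCount A' q ≤ firstCount A q := by
    apply Finset.card_le_card
    intro i hi
    simp only [mem_filter, mem_univ, true_and] at hi ⊢
    by_cases h : i = i₀
    · subst h
      have := rank_mono (A i) (A' i) p hlt hpres q hq
      omega
    · rw [heq i h] at hi; exact hi
  have hk0 : (0:ℝ) < (k:ℝ) := by exact_mod_cast hk
  have hm1 : (0:ℝ) < (m:ℝ) - 1 := by
    have : (2:ℝ) ≤ (m:ℝ) := by exact_mod_cast hm
    linarith
  have hl : (0:ℝ) < 1 - lam := by linarith
  have h1 : hybrid lam A' q ≤ hybrid lam A q := by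
    unfold hybrid
    gcongr
  have h2 : hybrid lam A p < hybrid lam A' p := by
    have hB : (borda A p : ℝ) < (borda A' p : ℝ) := by exact_mod_cast hBp
    have ht : (firstCount A p : ℝ) ≤ (firstCount A' p : ℝ) := by exact_mod_cast htp
    unfold hybrid
    apply add_lt_add_of_lt_of_le
    · apply div_lt_div_of_pos_right _ (by positivity)
      exact mul_lt_mul_of_pos_left hB hl
    · gcongr
  exact lt_of_le_of_lt (h1.trans hH) h2
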